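/- Let s^{(j)} = W c^{(j)}, j = 0,...,N_c-1, with W = (ω_N^{-n·r})_{n∈Λ_N, r∈Λ_L}, and suppose Σ_j |s^{(j)}_ν|² > 0 for all ν ∈ Λ_N. Let B^{(j)} = P F diag(s̃^{(j)}) with s̃^{(j)} the pointwise normalized sensitivities and P the 0/1 diagonal projection onto indices Λ_P ⊆ Λ_N. Denote by ĉ^{(j)} ∈ ℂ^{N²} the zero-extension of c^{(j)} from Λ_L to Λ_N. Then Σ_{j=0}^{N_c-1} (B^{(j)})*B^{(j)} is invertible if and only if the stacked matrix [(ĉ^{(j)}_{(ν-n) mod Λ_N})_{ν∈Λ_P, n∈Λ_N}]_{j=0}^{N_c-1} ∈ ℂ^{N_c|Λ_P| × N²} has rank N². In particular, invertibility implies N_c|Λ_P| ≥ N² and Λ_N ⊆ ∪_{ν∈Λ_P}(ν + Λ_L). -/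

import Mathlib

open Complex Matrix BigOperators Finset

noncomputable def omegaN (N : ℕ) : ℂ := Complex.exp (-2 * Real.pi * Complex.I / N)

/-- ω_N raised to an exponent given modulo N. -/
noncomputable def eN (N : ℕ) (x : ZMod N) : ℂ := omegaN N ^ x.val

/-- The centered 2D DFT matrix F = (ω_N^{ν·n}) indexed by (ZMod N)², which
realizes the index set Λ_N = {-N/2,…,N/2-1}² with periodic wrapping. -/
noncomputable def dft2 (N : ℕ) [NeZero N] :
    Matrix (ZMod N × ZMod N) (ZMod N × ZMod N) ℂ :=
  Matrix.of fun ν n => eN N (ν.1 * n.1 + ν.2 * n.2)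

/-- Centering map identifying Fin L with {-n,…,n} ⊂ ZMod N (L = 2n+1). -/
def cenM (N L : ℕ) (i : Fin L) : ZMod N := ((i : ℕ) : ZMod N) - (((L - 1) / 2 : ℕ) : ZMod N)

/-- (W a)_x = Σ_{r ∈ Λ_L} a_r ω_N^{-r·x}, the trigonometric-polynomial model map. -/
noncomputable def Wmap (N L : ℕ) (a : Fin L × Fin L → ℂ) (x : ZMod N × ZMod N) : ℂ :=
  ∑ r : Fin L × Fin L, a r * eN N (-(cenM N L r.1 * x.1 + cenM N L r.2 * x.2))

/-!
Write `s̃⁽ʲ⁾ = s⁽ʲ⁾ w` with `w > 0` the normalisation. Since `s⁽ʲ⁾` is the inverse transform of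
the zero-extended coefficients `ĉ⁽ʲ⁾`, the convolution theorem gives `F D(s⁽ʲ⁾) = C(ĉ⁽ʲ⁾) F` with
`C` the circulant matrix, so `B⁽ʲ⁾ = P C(ĉ⁽ʲ⁾) X` with `X = F D(w)` invertible. Hence
`∑ⱼ B⁽ʲ⁾*B⁽ʲ⁾ = X* (S* S) X`, where `S` stacks the rows `ν ∈ Λ_P` of the circulants, and the sum is
invertible iff `S` is injective. An injective `S` has at least as many rows as columns and no zero
column; a nonzero entry `ĉ⁽ʲ⁾(ν - x)` means `ν - x ∈ Λ_L`, i.e. `x ∈ ν + Λ_L` as `Λ_L = -Λ_L`.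
-/

section Characters

variable {N : ℕ} [NeZero N]

lemma eN_eq_stdAddChar_neg (x : ZMod N) : eN N x = ZMod.stdAddChar (-x) := by
  rw [AddChar.map_neg_eq_inv, ZMod.stdAddChar_apply, ZMod.toCircle_apply, ← Complex.exp_neg, eN,
    omegaN, ← Complex.exp_nat_mul]
  ring_nf

lemma eN_add (x y : ZMod N) : eN N (x + y) = eN N x * eN N y := by
  simp only [eN_eq_stdAddChar_neg, neg_add, AddChar.map_add_eq_mul]

lemma star_eN (x : ZMod N) : star (eN N x) = eN N (-x) := by
  rw [eN_eq_stdAddChar_neg, eN_eq_stdAddChar_neg, neg_neg, AddChar.map_neg_eq_conj, RCLike.star_def,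
    Complex.conj_conj]

lemma sum_eN_mul (k : ZMod N) : ∑ x : ZMod N, eN N (k * x) = if k = 0 then (N : ℂ) else 0 := by
  simp_rw [eN_eq_stdAddChar_neg, neg_mul_eq_neg_mul, mul_comm (-k)]
  rw [AddChar.sum_mulShift _ (ZMod.isPrimitive_stdAddChar N), ZMod.card]
  simp only [neg_eq_zero, apply_ite (Nat.cast : ℕ → ℂ), Nat.cast_zero]

lemma sum_eN_dot (k : ZMod N × ZMod N) :
    ∑ x : ZMod N × ZMod N, eN N (k.1 * x.1 + k.2 * x.2) = if k = 0 then (N : ℂ) ^ 2 else 0 := by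
  simp_rw [eN_add, Fintype.sum_prod_type, ← Finset.mul_sum, ← Finset.sum_mul, sum_eN_mul,
    Prod.ext_iff, Prod.fst_zero, Prod.snd_zero]
  split_ifs <;> simp_all [sq]

lemma dft2_mul_conjTranspose : dft2 N * (dft2 N)ᴴ = ((N : ℂ) ^ 2) • (1 : Matrix _ _ ℂ) := by
  ext ν μ
  have hsum : ∀ x : ZMod N × ZMod N, eN N (ν.1 * x.1 + ν.2 * x.2 + -(μ.1 * x.1 + μ.2 * x.2)) =
      eN N ((ν - μ).1 * x.1 + (ν - μ).2 * x.2) := fun x => by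
    simp only [Prod.fst_sub, Prod.snd_sub]; ring_nf
  simp only [mul_apply, conjTranspose_apply, dft2, of_apply, star_eN, ← eN_add, hsum, sum_eN_dot,
    sub_eq_zero, Matrix.smul_apply, one_apply, smul_eq_mul, mul_ite, mul_one, mul_zero]

lemma isUnit_dft2 : IsUnit (dft2 N) := by
  have hN : ((N : ℂ) ^ 2) ≠ 0 := pow_ne_zero _ (Nat.cast_ne_zero.2 (NeZero.ne N))
  refine (isUnit_iff_isUnit_det _).2
    (isUnit_det_of_right_inverse (B := ((N : ℂ) ^ 2)⁻¹ • (dft2 N)ᴴ) ?_)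
  rw [Matrix.mul_smul, dft2_mul_conjTranspose, smul_smul, inv_mul_cancel₀ hN, one_smul]

lemma dft2_mul_diagonal_eq_circulant_mul (a : ZMod N × ZMod N → ℂ) :
    dft2 N * diagonal (fun y => ∑ z, a z * eN N (-(z.1 * y.1 + z.2 * y.2))) =
      circulant a * dft2 N := by
  ext ν y
  rw [mul_diagonal, mul_apply, Finset.mul_sum]
  refine Fintype.sum_equiv (Equiv.subLeft ν) _ _ fun z => ?_
  have hdot : (ν - z).1 * y.1 + (ν - z).2 * y.2 =
      (ν.1 * y.1 + ν.2 * y.2) + -(z.1 * y.1 + z.2 * y.2) := by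
    simp only [Prod.fst_sub, Prod.snd_sub]; ring
  simp only [circulant_apply, Equiv.subLeft_apply, sub_sub_cancel, dft2, of_apply]
  rw [hdot, eN_add _ (-(z.1 * y.1 + z.2 * y.2))]
  ring

end Characters

section Centering

variable {N L : ℕ}

lemma cenM_injective (hLN : L ≤ N) : Function.Injective (cenM N L) := by
  intro i j hij
  have hval := congrArg ZMod.val (sub_left_injective hij)
  rwa [ZMod.val_cast_of_lt (i.2.trans_le hLN), ZMod.val_cast_of_lt (j.2.trans_le hLN),
    ← Fin.ext_iff] at hval

lemma exists_cenM_eq_neg {n : ℕ} (hL : L = 2 * n + 1) (i : Fin L) :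
    ∃ i' : Fin L, cenM N L i' = -cenM N L i := by
  refine ⟨i.rev, ?_⟩
  have hi : (i : ℕ) + 1 ≤ L := i.2
  have hhalf : (L - 1) / 2 = n := by omega
  have hLcast : (L : ZMod N) = 2 * n + 1 := by rw [hL]; push_cast; ring
  simp only [cenM, Fin.val_rev, hhalf]
  rw [Nat.cast_sub hi, hLcast]
  push_cast
  ring

lemma Wmap_eq_sum_of_zeroExtension [NeZero N] (hLN : L ≤ N) (c : Fin L × Fin L → ℂ)
    (cc : ZMod N × ZMod N → ℂ)
    (hcc : ∀ r : Fin L × Fin L, cc (cenM N L r.1, cenM N L r.2) = c r)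
    (hcc0 : ∀ x, (∀ r : Fin L × Fin L, (cenM N L r.1, cenM N L r.2) ≠ x) → cc x = 0) :
    Wmap N L c = fun y => ∑ z, cc z * eN N (-(z.1 * y.1 + z.2 * y.2)) := by
  funext y
  refine Fintype.sum_of_injective (Prod.map (cenM N L) (cenM N L))
    ((cenM_injective hLN).prodMap (cenM_injective hLN)) _ _ (fun x hx => ?_) (fun r => ?_)
  · rw [hcc0 x fun r hr => hx ⟨r, hr⟩, zero_mul]
  · rw [← hcc]
    rfl

lemma exists_eq_add_cenM_of_ne_zero {R : Type*} [Zero R] {n : ℕ} (hL : L = 2 * n + 1)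
    (cc : ZMod N × ZMod N → R)
    (hcc0 : ∀ x, (∀ r : Fin L × Fin L, (cenM N L r.1, cenM N L r.2) ≠ x) → cc x = 0)
    {ν x : ZMod N × ZMod N} (hne : cc (ν - x) ≠ 0) :
    ∃ r : Fin L × Fin L, x = (ν.1 + cenM N L r.1, ν.2 + cenM N L r.2) := by
  obtain ⟨r, hr⟩ : ∃ r : Fin L × Fin L, (cenM N L r.1, cenM N L r.2) = ν - x := by
    by_contra! h
    exact hne (hcc0 _ h)
  obtain ⟨r₁, hr₁⟩ := exists_cenM_eq_neg (N := N) hL r.1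
  obtain ⟨r₂, hr₂⟩ := exists_cenM_eq_neg (N := N) hL r.2
  refine ⟨(r₁, r₂), ?_⟩
  rw [hr₁, hr₂, ← sub_eq_add_neg, ← sub_eq_add_neg]
  exact (show x = ν - (cenM N L r.1, cenM N L r.2) by rw [hr, sub_sub_cancel])

end Centering

section StackedRows

variable {ι m n R : Type*}

/-- With `M j = circulant ĉ⁽ʲ⁾` and `S = Λ_P` this is the stacked matrix
`[(ĉ⁽ʲ⁾_{(ν-x) mod Λ_N})_{ν ∈ Λ_P, x ∈ Λ_N}]ⱼ` of the paper. -/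
def stackRowsOn (M : ι → Matrix m n R) (S : Finset m) : Matrix (ι × S) n R :=
  of fun p k => M p.1 p.2 k

lemma conjTranspose_stackRowsOn_mul_self [Fintype ι] [Fintype m] [Semiring R] [StarRing R]
    [DecidableEq m] (M : ι → Matrix m n R) (S : Finset m) :
    (stackRowsOn M S)ᴴ * stackRowsOn M S =
      ∑ i, (diagonal (fun k => if k ∈ S then (1 : R) else 0) * M i)ᴴ *
        (diagonal (fun k => if k ∈ S then (1 : R) else 0) * M i) := by
  ext x y
  rw [Matrix.sum_apply, mul_apply, Fintype.sum_prod_type]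
  refine Finset.sum_congr rfl fun i _ => ?_
  rw [mul_apply]
  have hterm : ∀ k, star ((if k ∈ S then 1 else 0) * M i k x) *
      ((if k ∈ S then 1 else 0) * M i k y) = if k ∈ S then star (M i k x) * M i k y else 0 := by
    intro k; split_ifs <;> simp
  simp only [conjTranspose_apply, diagonal_mul, stackRowsOn, of_apply, hterm,
    Finset.sum_ite_mem, Finset.univ_inter]
  exact Finset.sum_coe_sort S fun k => star (M i k x) * M i k y

lemma stackRowsOn_mulVec_injective_iff [Fintype n] [CommRing R] (M : ι → Matrix m n R)
    (S : Finset m) :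
    Function.Injective (stackRowsOn M S).mulVec ↔
      ∀ v, (∀ i, ∀ k ∈ S, (M i *ᵥ v) k = 0) → v = 0 := by
  rw [← coe_mulVecLin, injective_iff_map_eq_zero]
  simp only [mulVecLin_apply, funext_iff, Prod.forall, Subtype.forall]
  rfl

end StackedRows

section MatrixFacts

variable {m n : Type*} [Fintype n]

lemma isUnit_conjTranspose_mul_self_iff [Fintype m] {K : Type*} [Field K] [PartialOrder K]
    [StarRing K] [StarOrderedRing K] [DecidableEq n] (A : Matrix m n K) :
    IsUnit (Aᴴ * A) ↔ Function.Injective A.mulVec := by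
  rw [← mulVec_injective_iff_isUnit, ← coe_mulVecLin, ← coe_mulVecLin, injective_iff_map_eq_zero,
    injective_iff_map_eq_zero]
  simp only [mulVecLin_apply, conjTranspose_mul_self_mulVec_eq_zero]

lemma isUnit_star_mul_mul_iff {M : Type*} [Monoid M] [StarMul M] {x : M} (hx : IsUnit x)
    (y : M) : IsUnit (star x * y * x) ↔ IsUnit y := by
  lift x to Mˣ using hx
  rw [Units.isUnit_mul_units, ← Units.coe_star, Units.isUnit_units_mul]

lemma card_le_card_of_mulVec_injective [Fintype m] {R : Type*} [CommRing R] [Nontrivial R]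
    {A : Matrix m n R} (hA : Function.Injective A.mulVec) : Fintype.card n ≤ Fintype.card m := by
  simpa using LinearMap.finrank_le_finrank_of_injective (f := A.mulVecLin) hA

lemma exists_ne_zero_of_mulVec_injective {R : Type*} [Semiring R] [Nontrivial R] [DecidableEq n]
    {A : Matrix m n R} (hA : Function.Injective A.mulVec) (x : n) : ∃ i, A i x ≠ 0 := by
  by_contra! hcol
  have hsingle : A *ᵥ Pi.single x 1 = A *ᵥ 0 := by
    rw [mulVec_single_one, mulVec_zero]
    exact funext hcol
  simpa using congrFun (hA hsingle) x

end MatrixFacts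

/-- Invertibility criterion: Σⱼ (B⁽ʲ⁾)*B⁽ʲ⁾ is invertible iff the stacked cyclic-shift matrix
built from the zero-extended coefficient vectors ĉ⁽ʲ⁾ has full column rank N²; in particular
invertibility forces N_c·|Λ_P| ≥ N² and Λ_N ⊆ ∪_{ν∈Λ_P}(ν + Λ_L). -/
theorem stmt11 (N L n Nc : ℕ) [NeZero N] (hL : L = 2 * n + 1) (hLN : L < N)
    (c : Fin Nc → Fin L × Fin L → ℂ)
    (s : Fin Nc → ZMod N × ZMod N → ℂ)
    (hsdef : ∀ j, s j = Wmap N L (c j))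
    (hpos : ∀ x, 0 < ∑ j : Fin Nc, ‖s j x‖ ^ 2)
    (st : Fin Nc → ZMod N × ZMod N → ℂ)
    (hst : ∀ j x, st j x =
      s j x * (((Real.sqrt (∑ ℓ : Fin Nc, ‖s ℓ x‖ ^ 2))⁻¹ : ℝ) : ℂ))
    (ΛP : Finset (ZMod N × ZMod N))
    (B : Fin Nc → Matrix (ZMod N × ZMod N) (ZMod N × ZMod N) ℂ)
    (hB : ∀ j, B j = Matrix.diagonal (fun i => if i ∈ ΛP then (1 : ℂ) else 0) *
      dft2 N * Matrix.diagonal (st j))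
    (cc : Fin Nc → ZMod N × ZMod N → ℂ)
    (hcc : ∀ j (r : Fin L × Fin L), cc j (cenM N L r.1, cenM N L r.2) = c j r)
    (hcc0 : ∀ j x, (∀ r : Fin L × Fin L, (cenM N L r.1, cenM N L r.2) ≠ x) → cc j x = 0) :
    (IsUnit (∑ j : Fin Nc, (B j)ᴴ * B j) ↔
      ∀ g : ZMod N × ZMod N → ℂ,
        (∀ j : Fin Nc, ∀ ν ∈ ΛP,
          ∑ x : ZMod N × ZMod N, cc j (ν.1 - x.1, ν.2 - x.2) * g x = 0) → g = 0) ∧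
    (IsUnit (∑ j : Fin Nc, (B j)ᴴ * B j) →
      (N ^ 2 ≤ Nc * ΛP.card ∧
        ∀ x : ZMod N × ZMod N, ∃ ν ∈ ΛP, ∃ r : Fin L × Fin L,
          x = (ν.1 + cenM N L r.1, ν.2 + cenM N L r.2))) := by
  set w : ZMod N × ZMod N → ℂ := fun x => ((Real.sqrt (∑ ℓ : Fin Nc, ‖s ℓ x‖ ^ 2))⁻¹ : ℝ)
  set S := stackRowsOn (fun j => circulant (cc j)) ΛP
  have hw : ∀ x, w x ≠ 0 := fun x =>
    Complex.ofReal_ne_zero.2 (inv_pos.2 (Real.sqrt_pos.2 (hpos x))).ne'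
  have hX : IsUnit (dft2 N * diagonal w) :=
    isUnit_dft2.mul (isUnit_diagonal.2 (Pi.isUnit_iff.2 fun x => (hw x).isUnit))
  have hBfac : ∀ j, B j = diagonal (fun i => if i ∈ ΛP then (1 : ℂ) else 0) * circulant (cc j) *
      (dft2 N * diagonal w) := by
    intro j
    have hst' : st j = fun x => s j x * w x := funext (hst j)
    rw [hB j, hst', ← diagonal_mul_diagonal, hsdef j,
      Wmap_eq_sum_of_zeroExtension hLN.le (c j) (cc j) (hcc j) (hcc0 j), ← Matrix.mul_assoc,
      Matrix.mul_assoc (diagonal _), dft2_mul_diagonal_eq_circulant_mul]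
    simp only [Matrix.mul_assoc]
  have hgram : ∑ j, (B j)ᴴ * B j =
      star (dft2 N * diagonal w) * (Sᴴ * S) * (dft2 N * diagonal w) := by
    rw [conjTranspose_stackRowsOn_mul_self, Finset.mul_sum, Finset.sum_mul]
    refine Finset.sum_congr rfl fun j _ => ?_
    rw [hBfac j, conjTranspose_mul, star_eq_conjTranspose]
    simp only [Matrix.mul_assoc]
  have hS : IsUnit (∑ j, (B j)ᴴ * B j) ↔ Function.Injective S.mulVec := by
    open scoped ComplexOrder in
    rw [hgram, isUnit_star_mul_mul_iff hX, isUnit_conjTranspose_mul_self_iff]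
  refine ⟨hS.trans (stackRowsOn_mulVec_injective_iff _ _), fun hU => ⟨?_, fun x => ?_⟩⟩
  · simpa [Fintype.card_prod, ZMod.card, sq] using card_le_card_of_mulVec_injective (hS.1 hU)
  · obtain ⟨⟨j, ν, hν⟩, hne⟩ := exists_ne_zero_of_mulVec_injective (hS.1 hU) x
    exact ⟨ν, hν, exists_eq_add_cenM_of_ne_zero hL (cc j) (hcc0 j) hne⟩
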